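/- Let Q and Q' be monomial primary ideals of S = K[x_1,…,x_n] (n ≥ 2) with √Q = (x_1,…,x_{n−1}) and √Q' = (x_2,…,x_n). Then sdepth(Q ∩ Q') ≤ n − ⌊(n−1)/2⌋. -/

import Mathlib

/-!
The exponents of the monomials of a Stanley space `x^a K[Z]` form a set closed under `⊓` and
under raising the exponent of a variable of `Z`. Choose `ρ` with `x_1^ρ ∈ Q` and
`x_j^ρ ∈ Q'` for `j ≥ 2`. Then every `x_1^ρ x_j^ρ` (`j ≥ 2`) lies in `Q ∩ Q'`, hence in some
Stanley space `φ(j)`, while `x_1^ρ ∉ Q'`. Closure under `⊓` makes `φ` injective, and `φ(j)` also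
contains `x_1^ρ x_j^ρ x^ρ` for the at least `k - 2` variables `x ∈ Z_{φ(j)} \ {x_1, x_j}`. As a
monomial lies in only one Stanley space, this yields `(n - 1)(k - 2)` distinct pairs in
`{x_2, …, x_n}`, so `(n - 1)(k - 2) ≤ C(n - 1, 2)`, i.e. `k ≤ n - ⌊(n - 1)/2⌋`.
-/

open MvPolynomial

variable {K : Type*} [Field K]

/-- The Stanley space `u·K[Z]`: the `K`-linear span of all `u * v` where `v` is a
monomial in the variables of `Z`. -/
noncomputable def stanleySpace {n : ℕ} (u : MvPolynomial (Fin n) K) (Z : Finset (Fin n)) :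
    Submodule K (MvPolynomial (Fin n) K) :=
  Submodule.span K { w | ∃ d : Fin n →₀ ℕ, ↑d.support ⊆ (Z : Set (Fin n)) ∧
    w = u * MvPolynomial.monomial d 1 }

/-- `u` is a monomial. -/
def IsMonomial {n : ℕ} (u : MvPolynomial (Fin n) K) : Prop :=
  ∃ d : Fin n →₀ ℕ, u = MvPolynomial.monomial d 1

/-- A monomial ideal: an ideal generated by monomials. -/
def IsMonomialIdeal {n : ℕ} (I : Ideal (MvPolynomial (Fin n) K)) : Prop :=
  ∃ G : Set (MvPolynomial (Fin n) K), (∀ u ∈ G, IsMonomial u) ∧ I = Ideal.span G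

/-- `(u i, Z i)` is a Stanley decomposition of the ideal `I`:
`I = ⊕ᵢ uᵢ K[Zᵢ]` as `K`-vector spaces, with each `uᵢ` a monomial. -/
def IsStanleyDecomp {n : ℕ} (I : Ideal (MvPolynomial (Fin n) K)) {s : ℕ}
    (u : Fin s → MvPolynomial (Fin n) K) (Z : Fin s → Finset (Fin n)) : Prop :=
  (∀ i, IsMonomial (u i)) ∧
  iSupIndep (fun i => stanleySpace (u i) (Z i)) ∧
  (⨆ i, stanleySpace (u i) (Z i)) = Submodule.restrictScalars K I

/-- The Stanley depth of a monomial ideal: the largest `k` such that there is a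
Stanley decomposition all of whose Stanley spaces have dimension at least `k`. -/
noncomputable def sdepth {n : ℕ} (I : Ideal (MvPolynomial (Fin n) K)) : ℕ :=
  sSup { k | ∃ (s : ℕ) (u : Fin s → MvPolynomial (Fin n) K) (Z : Fin s → Finset (Fin n)),
    IsStanleyDecomp I u Z ∧ ∀ i, k ≤ (Z i).card }

open Finset

section Exponents

variable {σ : Type*}

noncomputable def powExp (ρ : ℕ) (S : Finset σ) : σ →₀ ℕ :=
  ∑ y ∈ S, Finsupp.single y ρ

lemma powExp_apply [DecidableEq σ] (ρ : ℕ) (S : Finset σ) (y : σ) :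
    powExp ρ S y = if y ∈ S then ρ else 0 := by
  simp [powExp, Finsupp.finsetSum_apply, Finsupp.single_apply]

lemma powExp_inter [DecidableEq σ] (ρ : ℕ) (S T : Finset σ) :
    powExp ρ (S ∩ T) = powExp ρ S ⊓ powExp ρ T := by
  ext y
  simp only [Finsupp.inf_apply, powExp_apply, mem_inter]
  split_ifs <;> simp_all

lemma powExp_insert [DecidableEq σ] {ρ : ℕ} {S : Finset σ} {x : σ} (hx : x ∉ S) :
    powExp ρ (insert x S) = powExp ρ S + Finsupp.single x ρ := by
  rw [powExp, sum_insert hx, add_comm, powExp]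

lemma monomial_powExp {R : Type*} [CommSemiring R] (ρ : ℕ) (S : Finset σ) :
    monomial (powExp ρ S) (1 : R) = ∏ y ∈ S, X y ^ ρ := by
  simp only [powExp, monomial_sum_one, X_pow_eq_monomial]

def stanleyExps (a : σ →₀ ℕ) (Z : Finset σ) : Set (σ →₀ ℕ) :=
  {e | a ≤ e ∧ ↑(e - a).support ⊆ (Z : Set σ)}

lemma inf_mem_stanleyExps {a e e' : σ →₀ ℕ} {Z : Finset σ} (he : e ∈ stanleyExps a Z)
    (he' : e' ∈ stanleyExps a Z) : e ⊓ e' ∈ stanleyExps a Z :=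
  ⟨le_inf he.1 he'.1,
    (coe_subset.2 (Finsupp.support_mono (tsub_le_tsub_right inf_le_left a))).trans he.2⟩

lemma add_single_mem_stanleyExps [DecidableEq σ] {a e : σ →₀ ℕ} {Z : Finset σ} {x : σ}
    (he : e ∈ stanleyExps a Z) (hx : x ∈ Z) (m : ℕ) :
    e + Finsupp.single x m ∈ stanleyExps a Z := by
  refine ⟨he.1.trans le_self_add, ?_⟩
  rw [← tsub_add_eq_add_tsub he.1]
  intro y hy
  rcases mem_union.1 (Finsupp.support_add hy) with hy | hy
  · exact he.2 hy
  · rw [mem_singleton.1 (Finsupp.support_single_subset hy)]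
    exact hx

lemma powExp_insert_mem_stanleyExps [DecidableEq σ] {a : σ →₀ ℕ} {Z S : Finset σ} {ρ : ℕ}
    {x : σ} (hS : powExp ρ S ∈ stanleyExps a Z) (hx : x ∈ Z) :
    powExp ρ (insert x S) ∈ stanleyExps a Z := by
  by_cases hxS : x ∈ S
  · rwa [insert_eq_of_mem hxS]
  · rw [powExp_insert hxS]
    exact add_single_mem_stanleyExps hS hx ρ

end Exponents

lemma card_mul_le_choose_two_of_injOn {α : Type*} [DecidableEq α] {B : Finset α}
    {T : α → Finset α} {m : ℕ} (hT : ∀ j ∈ B, m ≤ #(T j)) (hTB : ∀ j ∈ B, T j ⊆ B.erase j)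
    (hinj : Set.InjOn (fun jx : Σ _ : α, α => ({jx.1, jx.2} : Finset α)) (B.sigma T)) :
    #B * m ≤ (#B).choose 2 :=
  calc #B * m = ∑ _ ∈ B, m := by simp [mul_comm]
    _ ≤ ∑ j ∈ B, #(T j) := sum_le_sum hT
    _ = #(B.sigma T) := (card_sigma _ _).symm
    _ ≤ #(B.powersetCard 2) := by
      refine card_le_card_of_injOn _ ?_ hinj
      rintro ⟨j, x⟩ hjx
      rw [mem_coe, mem_sigma] at hjx
      obtain ⟨hxj, hxB⟩ := mem_erase.1 (hTB j hjx.1 hjx.2)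
      rw [mem_coe, mem_powersetCard]
      exact ⟨insert_subset hjx.1 (singleton_subset_iff.2 hxB),
        card_pair (Ne.symm hxj)⟩
    _ = (#B).choose 2 := card_powersetCard _ _

lemma stanleySpace_monomial {n : ℕ} (a : Fin n →₀ ℕ) (Z : Finset (Fin n)) :
    stanleySpace (monomial a (1 : K)) Z = restrictSupport K (stanleyExps a Z) := by
  rw [stanleySpace, restrictSupport_eq_span]
  congr 1
  ext w
  constructor
  · rintro ⟨d, hd, rfl⟩
    exact ⟨a + d, ⟨le_self_add, by rwa [add_tsub_cancel_left]⟩, by rw [monomial_mul, one_mul]⟩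
  · rintro ⟨e, ⟨hae, hZ⟩, rfl⟩
    exact ⟨e - a, hZ, by rw [monomial_mul, one_mul, add_tsub_cancel_of_le hae]⟩

namespace IsStanleyDecomp

variable {n s : ℕ} {I : Ideal (MvPolynomial (Fin n) K)} {u : Fin s → MvPolynomial (Fin n) K}
  {Z : Fin s → Finset (Fin n)} {a : Fin s → Fin n →₀ ℕ}

lemma monomial_mem_iff (hd : IsStanleyDecomp I u Z) (ha : ∀ i, u i = monomial (a i) 1)
    (e : Fin n →₀ ℕ) : monomial e (1 : K) ∈ I ↔ ∃ i, e ∈ stanleyExps (a i) (Z i) := by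
  have hI : Submodule.restrictScalars K I = restrictSupport K (⋃ i, stanleyExps (a i) (Z i)) := by
    simp_rw [← hd.2.2, restrictSupport_eq_span, Set.image_iUnion, Submodule.span_iUnion, ha,
      stanleySpace_monomial, restrictSupport_eq_span]
  rw [← Submodule.restrictScalars_mem K, hI, monomial_mem_restrictSupport]
  simp

lemma eq_of_mem_stanleyExps (hd : IsStanleyDecomp I u Z) (ha : ∀ i, u i = monomial (a i) 1)
    {i j : Fin s} {e : Fin n →₀ ℕ} (hi : e ∈ stanleyExps (a i) (Z i))
    (hj : e ∈ stanleyExps (a j) (Z j)) : i = j := by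
  by_contra hij
  have h0 := Submodule.disjoint_def.1 (hd.2.1.pairwiseDisjoint hij) (monomial e (1 : K))
    (by simp [ha, stanleySpace_monomial, hi]) (by simp [ha, stanleySpace_monomial, hj])
  exact one_ne_zero (monomial_eq_zero.1 h0)

lemma eq_of_powExp_pair_mem (hd : IsStanleyDecomp I u Z) (ha : ∀ i, u i = monomial (a i) 1)
    {p : Fin n} {ρ : ℕ} (hnot : monomial (powExp ρ {p}) (1 : K) ∉ I) {i : Fin s} {j j' : Fin n}
    (hj : powExp ρ {p, j} ∈ stanleyExps (a i) (Z i))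
    (hj' : powExp ρ {p, j'} ∈ stanleyExps (a i) (Z i)) : j = j' := by
  by_contra hne
  refine hnot ((hd.monomial_mem_iff ha _).2 ⟨i, ?_⟩)
  have hp : ({p, j} ∩ {p, j'} : Finset (Fin n)) = {p} := by
    rw [← insert_inter_distrib, singleton_inter_of_notMem (by simpa using hne)]
    rfl
  rw [← hp, powExp_inter]
  exact inf_mem_stanleyExps hj hj'

lemma mul_sub_two_le_choose (hd : IsStanleyDecomp I u Z) (ha : ∀ i, u i = monomial (a i) 1)
    {k : ℕ} (hk : ∀ i, k ≤ #(Z i)) {p : Fin n} {ρ : ℕ}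
    (hmem : ∀ j ≠ p, monomial (powExp ρ {p, j}) (1 : K) ∈ I)
    (hnot : monomial (powExp ρ {p}) (1 : K) ∉ I) :
    (n - 1) * (k - 2) ≤ (n - 1).choose 2 := by
  obtain hB | ⟨j₀, hj₀⟩ := (univ.erase p).eq_empty_or_nonempty
  · have : n - 1 = 0 := by simpa using congrArg card hB
    simp [this]
  have : Nonempty (Fin s) := ⟨((hd.monomial_mem_iff ha _).1 (hmem j₀ (mem_erase.1 hj₀).1)).choose⟩
  choose! φ hφ using fun j (hj : j ≠ p) => (hd.monomial_mem_iff ha _).1 (hmem j hj)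
  set T : Fin n → Finset (Fin n) := fun j => ((Z (φ j)).erase p).erase j
  have hT : ∀ j ≠ p, ∀ x ∈ T j, powExp ρ {p, j, x} ∈ stanleyExps (a (φ j)) (Z (φ j)) := by
    intro j hj x hx
    simp only [T, mem_erase] at hx
    rw [show ({p, j, x} : Finset (Fin n)) = insert x {p, j} by ext; simp; tauto]
    exact powExp_insert_mem_stanleyExps (hφ j hj) hx.2.2
  have hT_card : ∀ j, k - 2 ≤ #(T j) := fun j => by
    show k - 2 ≤ #(((Z (φ j)).erase p).erase j)
    have := hk (φ j)
    have := pred_card_le_card_erase (s := Z (φ j)) (a := p)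
    have := pred_card_le_card_erase (s := (Z (φ j)).erase p) (a := j)
    omega
  -- Equal pairs `{j, x} = {j', x'}` give one monomial in the Stanley spaces of `φ j` and `φ j'`.
  have hpair_inj : Set.InjOn (fun jx : Σ _ : Fin n, Fin n => ({jx.1, jx.2} : Finset (Fin n)))
      ((univ.erase p).sigma T) := by
    rintro ⟨j, x⟩ hjx ⟨j', x'⟩ hjx' h
    simp only [coe_sigma, Set.mem_sigma_iff, mem_coe, mem_erase] at hjx hjx' h
    have hφ_eq := hd.eq_of_mem_stanleyExps ha (hT j hjx.1.1 x hjx.2)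
      ((congrArg (insert p) h : ({p, j, x} : Finset (Fin n)) = {p, j', x'}) ▸
        hT j' hjx'.1.1 x' hjx'.2)
    obtain rfl := hd.eq_of_powExp_pair_mem ha hnot (hφ j hjx.1.1) (hφ_eq ▸ hφ j' hjx'.1.1)
    have hxj : x ≠ j := (mem_erase.1 hjx.2).1
    have : x ∈ ({j, x'} : Finset (Fin n)) := h ▸ by simp
    simp only [mem_insert, mem_singleton, hxj, false_or] at this
    rw [this]
  have hB : #(univ.erase p) = n - 1 := by simp
  rw [← hB]
  exact card_mul_le_choose_two_of_injOn (fun j _ => hT_card j)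
    (fun j _ => erase_subset_erase _ (erase_subset_erase _ (subset_univ _)))
    hpair_inj

end IsStanleyDecomp

lemma le_sub_half_of_mul_sub_two_le_choose {n k : ℕ} (hn : 2 ≤ n)
    (h : (n - 1) * (k - 2) ≤ (n - 1).choose 2) : k ≤ n - (n - 1) / 2 := by
  obtain ⟨m, rfl⟩ := Nat.exists_eq_add_of_le' hn
  rw [show m + 2 - 1 = m + 1 by omega, Nat.choose_two_right, Nat.le_div_iff_mul_le two_pos,
    Nat.add_sub_cancel, mul_assoc] at h
  have := Nat.le_of_mul_le_mul_left h m.succ_pos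
  omega

lemma Ideal.exists_forall_ge_pow_mem_of_mem_radical {R : Type*} [CommSemiring R]
    [IsNoetherianRing R] (J : Ideal R) : ∃ m, ∀ m' ≥ m, ∀ x ∈ J.radical, x ^ m' ∈ J := by
  obtain ⟨m, hm⟩ := J.exists_radical_pow_le_of_fg J.radical.fg_of_isNoetherianRing
  exact ⟨m, fun m' hm' x hx => J.pow_mem_of_pow_mem (hm (Ideal.pow_mem_pow hx m)) hm'⟩

lemma MvPolynomial.X_notMem_ideal_span_X_image {σ R : Type*} [CommSemiring R] [Nontrivial R]
    {s : Set σ} {i : σ} (hi : i ∉ s) : (X i : MvPolynomial σ R) ∉ Ideal.span (X '' s) := by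
  classical
  simpa [mem_ideal_span_X_image, support_X, Finsupp.single_apply] using hi

theorem sdepth_inter_le_almost_all_general {n : ℕ} (hn : 2 ≤ n)
    (Q Q' : Ideal (MvPolynomial (Fin n) K))
    (hQr : Q.radical =
      Ideal.span ((fun i => (X i : MvPolynomial (Fin n) K)) '' {i | (i : ℕ) < n - 1}))
    (hQ'r : Q'.radical =
      Ideal.span ((fun i => (X i : MvPolynomial (Fin n) K)) '' {i | 1 ≤ (i : ℕ)})) :
    sdepth (Q ⊓ Q') ≤ n - (n - 1) / 2 := by
  refine csSup_le' fun k ⟨s, u, Z, hd, hk⟩ => ?_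
  choose a ha using hd.1
  let p : Fin n := ⟨0, by omega⟩
  obtain ⟨m, hm⟩ := Q.exists_forall_ge_pow_mem_of_mem_radical
  obtain ⟨m', hm'⟩ := Q'.exists_forall_ge_pow_mem_of_mem_radical
  have hpQ : X p ∈ Q.radical := hQr ▸ Ideal.subset_span ⟨p, by simp [p]; omega, rfl⟩
  have hjQ' : ∀ j ≠ p, X j ∈ Q'.radical := fun j hj =>
    hQ'r ▸ Ideal.subset_span ⟨j, Nat.one_le_iff_ne_zero.2 (Fin.val_ne_iff.2 hj), rfl⟩
  have hpQ' : X p ∉ Q'.radical := hQ'r ▸ X_notMem_ideal_span_X_image (by simp [p])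
  refine le_sub_half_of_mul_sub_two_le_choose hn
    (hd.mul_sub_two_le_choose ha hk (p := p) (ρ := max m m') (fun j hj => ?_) ?_)
  · rw [monomial_powExp, prod_pair hj.symm]
    exact ⟨Q.mul_mem_right _ (hm _ (le_max_left _ _) _ hpQ),
      Q'.mul_mem_left _ (hm' _ (le_max_right _ _) _ (hjQ' j hj))⟩
  · rw [monomial_powExp, prod_singleton]
    exact fun h => hpQ' ⟨_, h.2⟩

/-- If `Q, Q'` are monomial primary ideals with `√Q = (x_1,…,x_{n−1})` and
`√Q' = (x_2,…,x_n)`, `n ≥ 2`, then `sdepth(Q ∩ Q') ≤ n − ⌊(n−1)/2⌋`. -/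
theorem sdepth_inter_le_almost_all {n : ℕ} (hn : 2 ≤ n)
    (Q Q' : Ideal (MvPolynomial (Fin n) K))
    (hQm : IsMonomialIdeal Q) (hQ'm : IsMonomialIdeal Q')
    (hQp : Q.IsPrimary) (hQ'p : Q'.IsPrimary)
    (hQr : Q.radical =
      Ideal.span ((fun i => (X i : MvPolynomial (Fin n) K)) '' {i | (i : ℕ) < n - 1}))
    (hQ'r : Q'.radical =
      Ideal.span ((fun i => (X i : MvPolynomial (Fin n) K)) '' {i | 1 ≤ (i : ℕ)})) :
    sdepth (Q ⊓ Q') ≤ n - (n - 1) / 2 :=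
  sdepth_inter_le_almost_all_general hn Q Q' hQr hQ'r
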